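/- arXiv:0911.4711 — 2 statements merged into one kernel-verified Lean document; each statement's English description precedes it below -/
import Mathlib

section
/- Let T be a triangulated category, A ⊆ T a full dense triangulated subcategory (every object of T is a direct summand of an object of A). If the induced map K(A) → K(T) on Grothendieck groups is surjective, then A = T. -/
/-!
Call `X` and `Y` stably equivalent modulo `A` when `X ⊞ a ≅ Y ⊞ b` for some `a, b ∈ A`; the
classes form a commutative monoid under `⊞` in which the objects of `A` are zero. Density makes
it a group: a retract of an object of `A` splits off as a biproduct summand, so `X ⊞ Y ∈ A` for
some `Y`. Choosing such complements `Y₁, Y₃` of the outer terms of a distinguished triangle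
`X₁ → X₂ → X₃` and adding the split triangle `Y₁ → Y₁ ⊞ Y₃ → Y₃` puts `X₂ ⊞ Y₁ ⊞ Y₃` in `A`,
so the class of `X₂` is the sum of those of `X₁` and `X₃`. The class map therefore factors
through `K(T)` and kills the image of `K(A)`; if that image is everything, every class vanishes,
and `X ⊞ a ≅ b` with `a, b ∈ A` puts `X` in `A`.
-/

open CategoryTheory CategoryTheory.Pretriangulated

/-- The defining relations of the Grothendieck group of a pretriangulated category:
for each distinguished triangle `X → Y → Z → X[1]`, the relation `[Y] = [X] + [Z]`. -/
noncomputable def triangleRelations (C : Type*) [Category C] [Limits.HasZeroObject C]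
    [HasShift C ℤ] [Preadditive C] [∀ n : ℤ, (shiftFunctor C n).Additive]
    [Pretriangulated C] : AddSubgroup (FreeAbelianGroup C) :=
  AddSubgroup.closure
    {x | ∃ T : Triangle C, (T ∈ distTriang C) ∧
      x = FreeAbelianGroup.of T.obj₂ - FreeAbelianGroup.of T.obj₁ - FreeAbelianGroup.of T.obj₃}

open CategoryTheory.Limits ZeroObject

namespace CategoryTheory.ObjectProperty

variable {C : Type*} [Category C] [Preadditive C] [HasBinaryBiproducts C]
  (S : ObjectProperty C)

noncomputable def biprodRightComm (X Y Z : C) : (X ⊞ Y) ⊞ Z ≅ (X ⊞ Z) ⊞ Y :=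
  biprod.associator X Y Z ≪≫ biprod.mapIso (Iso.refl X) (biprod.braiding Y Z) ≪≫
    (biprod.associator X Z Y).symm

noncomputable def biprodBiprodBiprodComm (X Y Z W : C) :
    (X ⊞ Y) ⊞ (Z ⊞ W) ≅ (X ⊞ Z) ⊞ (Y ⊞ W) :=
  (biprod.associator _ Z W).symm ≪≫ biprod.mapIso (biprodRightComm X Y Z) (Iso.refl W) ≪≫
    biprod.associator _ Y W

def StablyEquiv (X Y : C) : Prop :=
  ∃ a b, S a ∧ S b ∧ Nonempty (X ⊞ a ≅ Y ⊞ b)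

lemma StablyEquiv.of_iso [S.ContainsZero] {X Y : C} (e : X ≅ Y) : S.StablyEquiv X Y :=
  have ⟨Z, _, hZ⟩ := S.exists_prop_of_containsZero
  ⟨Z, Z, hZ, hZ, ⟨biprod.mapIso e (Iso.refl Z)⟩⟩

lemma StablyEquiv.symm {X Y : C} : S.StablyEquiv X Y → S.StablyEquiv Y X :=
  fun ⟨a, b, ha, hb, ⟨e⟩⟩ => ⟨b, a, hb, ha, ⟨e.symm⟩⟩

variable [S.IsClosedUnderBinaryProducts]

lemma prop_binaryBiproduct {a b : C} (ha : S a) (hb : S b) : S (a ⊞ b) :=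
  S.prop_of_isLimit_binaryFan (BinaryBiproduct.isLimit a b) ha hb

lemma StablyEquiv.trans {X Y Z : C} :
    S.StablyEquiv X Y → S.StablyEquiv Y Z → S.StablyEquiv X Z :=
  fun ⟨a, b, ha, hb, ⟨e⟩⟩ ⟨c, d, hc, hd, ⟨f⟩⟩ =>
    ⟨a ⊞ c, d ⊞ b, S.prop_binaryBiproduct ha hc, S.prop_binaryBiproduct hd hb,
      ⟨(biprod.associator X a c).symm ≪≫ biprod.mapIso e (Iso.refl c) ≪≫ biprodRightComm Y b c ≪≫
        biprod.mapIso f (Iso.refl b) ≪≫ biprod.associator Z d b⟩⟩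

lemma StablyEquiv.biprod {X X' Y Y' : C} :
    S.StablyEquiv X X' → S.StablyEquiv Y Y' → S.StablyEquiv (X ⊞ Y) (X' ⊞ Y') :=
  fun ⟨a, b, ha, hb, ⟨e⟩⟩ ⟨c, d, hc, hd, ⟨f⟩⟩ =>
    ⟨a ⊞ c, b ⊞ d, S.prop_binaryBiproduct ha hc, S.prop_binaryBiproduct hb hd,
      ⟨biprodBiprodBiprodComm X Y a c ≪≫ biprod.mapIso e f ≪≫ biprodBiprodBiprodComm X' b Y' d⟩⟩

variable [S.ContainsZero]

def stablyEquivSetoid : Setoid C where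
  r := S.StablyEquiv
  iseqv := ⟨fun X => .of_iso S (Iso.refl X), StablyEquiv.symm S, StablyEquiv.trans S⟩

def StableClass : Type _ := _root_.Quotient S.stablyEquivSetoid

namespace StableClass

def mk (X : C) : S.StableClass := _root_.Quotient.mk _ X

lemma mk_eq_mk_iff {X Y : C} : mk S X = mk S Y ↔ S.StablyEquiv X Y :=
  _root_.Quotient.eq

lemma mk_eq_mk_of_iso {X Y : C} (e : X ≅ Y) : mk S X = mk S Y :=
  (mk_eq_mk_iff S).2 (.of_iso S e)

noncomputable instance : Add S.StableClass :=
  ⟨_root_.Quotient.map₂ (· ⊞ ·) fun _ _ h _ _ h' => StablyEquiv.biprod S h h'⟩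

lemma mk_biprod (X Y : C) : mk S (X ⊞ Y) = mk S X + mk S Y := rfl

variable [HasZeroObject C]

noncomputable instance : Zero S.StableClass := ⟨mk S 0⟩

noncomputable instance : AddCommMonoid S.StableClass where
  add_assoc := by
    rintro ⟨X⟩ ⟨Y⟩ ⟨Z⟩
    exact mk_eq_mk_of_iso S (biprod.associator X Y Z)
  zero_add := by
    rintro ⟨X⟩
    exact mk_eq_mk_of_iso S (isoZeroBiprod (isZero_zero C)).symm
  add_zero := by
    rintro ⟨X⟩
    exact mk_eq_mk_of_iso S (isoBiprodZero (isZero_zero C)).symm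
  add_comm := by
    rintro ⟨X⟩ ⟨Y⟩
    exact mk_eq_mk_of_iso S (biprod.braiding X Y)
  nsmul := nsmulRec

lemma mk_eq_zero_of_prop {a : C} (ha : S a) : mk S a = 0 := by
  obtain ⟨Z, hZ, hSZ⟩ := S.exists_prop_of_containsZero
  exact (mk_eq_mk_iff S).2
    ⟨Z, a, hSZ, ha, ⟨(isoBiprodZero hZ).symm ≪≫ isoZeroBiprod (isZero_zero C)⟩⟩

lemma isAddUnit_mk {X Y : C} (h : S (X ⊞ Y)) : IsAddUnit (mk S X) :=
  IsAddUnit.of_add_eq_zero (mk S Y) ((mk_biprod S X Y).symm.trans (mk_eq_zero_of_prop S h))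

noncomputable abbrev addCommGroup (hcompl : ∀ X : C, ∃ Y, S (X ⊞ Y)) :
    AddCommGroup S.StableClass :=
  have hunit (g : S.StableClass) : IsAddUnit g :=
    _root_.Quotient.inductionOn g fun X => have ⟨_, hY⟩ := hcompl X; isAddUnit_mk S hY
  letI : Neg S.StableClass := ⟨fun g => ↑(-(hunit g).addUnit)⟩
  { neg_add_cancel g := (hunit g).addUnit.neg_add
    zsmul := zsmulRec }

end StableClass

end CategoryTheory.ObjectProperty

namespace CategoryTheory.Pretriangulated

variable {C : Type*} [Category C] [HasZeroObject C] [HasShift C ℤ] [Preadditive C]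
  [∀ n : ℤ, (shiftFunctor C n).Additive] [Pretriangulated C]

noncomputable def piBoolIsoBiprod (F : Bool → C) : ∏ᶜ F ≅ F true ⊞ F false where
  hom := biprod.lift (Pi.π F true) (Pi.π F false)
  inv := Pi.lift fun | true => biprod.fst | false => biprod.snd
  hom_inv_id := Pi.hom_ext _ _ (by rintro (_ | _) <;> simp)
  inv_hom_id := biprod.hom_ext _ _ (by simp) (by simp)

lemma exists_iso_biprod_of_mono {X A : C} (i : X ⟶ A) [Mono i] :
    ∃ Y, Nonempty (A ≅ X ⊞ Y) := by
  obtain ⟨Y, q, w, hT⟩ := distinguished_cocone_triangle i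
  obtain ⟨e, -, -⟩ := exists_iso_binaryBiproduct_of_distTriang _ hT
    (Triangle.mor₃_eq_zero_of_mono₁ _ hT (inferInstanceAs (Mono i)))
  exact ⟨Y, ⟨e⟩⟩

lemma triangleRelations_le_ker_lift {G : Type*} [AddCommGroup G] {f : C → G}
    (hf : ∀ T ∈ distTriang C, f T.obj₂ = f T.obj₁ + f T.obj₃) :
    triangleRelations C ≤ (FreeAbelianGroup.lift f).ker :=
  (AddSubgroup.closure_le _).2 <| by
    rintro _ ⟨T, hT, rfl⟩
    simp [hf T hT]

lemma eq_zero_of_surjective_grothendieckGroup (S : ObjectProperty C)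
    (hK : ∀ k : FreeAbelianGroup C ⧸ triangleRelations C,
      ∃ x : FreeAbelianGroup {X : C // S X},
        QuotientAddGroup.mk' (triangleRelations C) (FreeAbelianGroup.map Subtype.val x) = k)
    {G : Type*} [AddCommGroup G] (f : C → G)
    (hf : ∀ T ∈ distTriang C, f T.obj₂ = f T.obj₁ + f T.obj₃) (hS : ∀ a, S a → f a = 0)
    (X : C) : f X = 0 := by
  obtain ⟨x, hx⟩ := hK (QuotientAddGroup.mk' _ (.of X))
  obtain ⟨r, hr, hxr⟩ := (QuotientAddGroup.mk'_eq_mk' _).1 hx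
  have hfS : (FreeAbelianGroup.lift f).comp
      (FreeAbelianGroup.map (Subtype.val : {a // S a} → C)) = 0 := by
    ext a
    simp [hS a a.2]
  have := congrArg (FreeAbelianGroup.lift f) hxr
  rwa [map_add, ← AddMonoidHom.comp_apply, hfS, triangleRelations_le_ker_lift hf hr,
    FreeAbelianGroup.lift_apply_of, AddMonoidHom.zero_apply, zero_add, eq_comm] at this

end CategoryTheory.Pretriangulated

namespace CategoryTheory.ObjectProperty

variable {C : Type*} [Category C] [HasZeroObject C] [HasShift C ℤ] [Preadditive C]
  [∀ n : ℤ, (shiftFunctor C n).Additive] [Pretriangulated C]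
  (S : ObjectProperty C) [S.IsClosedUnderIsomorphisms]

lemma exists_prop_biprod_of_retract {X a : C} (h : Retract X a) (ha : S a) :
    ∃ Y, S (X ⊞ Y) :=
  have ⟨Y, ⟨e⟩⟩ := exists_iso_biprod_of_mono h.i
  ⟨Y, S.prop_of_iso e ha⟩

lemma prop_biprod_obj₂ [S.IsTriangulatedClosed₂] {T T' : Triangle C}
    (hT : T ∈ distTriang C) (hT' : T' ∈ distTriang C)
    (h₁ : S (T.obj₁ ⊞ T'.obj₁)) (h₃ : S (T.obj₃ ⊞ T'.obj₃)) : S (T.obj₂ ⊞ T'.obj₂) := by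
  let F : Bool → Triangle C := fun b => cond b T T'
  have hF : productTriangle F ∈ distTriang C :=
    productTriangle_distinguished F (by rintro (_ | _) <;> assumption)
  exact S.prop_of_iso (piBoolIsoBiprod _) (S.ext_of_isTriangulatedClosed₂ _ hF
    (S.prop_of_iso (piBoolIsoBiprod _).symm h₁) (S.prop_of_iso (piBoolIsoBiprod _).symm h₃))

variable [S.IsTriangulated]

lemma prop_of_stableClass_mk_eq_zero {X : C} (h : StableClass.mk S X = 0) : S X := by
  obtain ⟨a, b, ha, hb, ⟨e⟩⟩ := (StableClass.mk_eq_mk_iff S).1 h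
  have hXa : S (X ⊞ a) := S.prop_of_iso e.symm (S.prop_binaryBiproduct S.prop_zero hb)
  exact S.ext_of_isTriangulatedClosed₁ _ (binaryBiproductTriangle_distinguished X a) hXa ha

lemma StableClass.mk_obj₂_eq_add (hcompl : ∀ X : C, ∃ Y, S (X ⊞ Y)) {T : Triangle C}
    (hT : T ∈ distTriang C) : mk S T.obj₂ = mk S T.obj₁ + mk S T.obj₃ := by
  obtain ⟨Y₁, h₁⟩ := hcompl T.obj₁
  obtain ⟨Y₃, h₃⟩ := hcompl T.obj₃
  have h₂ : S (T.obj₂ ⊞ (Y₁ ⊞ Y₃)) :=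
    S.prop_biprod_obj₂ hT (binaryBiproductTriangle_distinguished Y₁ Y₃) h₁ h₃
  calc mk S T.obj₂ = mk S T.obj₂ + (mk S T.obj₁ + mk S Y₁) + (mk S T.obj₃ + mk S Y₃) := by
        rw [← mk_biprod S T.obj₁, ← mk_biprod S T.obj₃, mk_eq_zero_of_prop S h₁,
          mk_eq_zero_of_prop S h₃, add_zero, add_zero]
    _ = mk S (T.obj₂ ⊞ (Y₁ ⊞ Y₃)) + (mk S T.obj₁ + mk S T.obj₃) := by
        rw [mk_biprod, mk_biprod]
        abel
    _ = mk S T.obj₁ + mk S T.obj₃ := by rw [mk_eq_zero_of_prop S h₂, zero_add]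

end CategoryTheory.ObjectProperty

/-- Thomason's theorem on dense triangulated subcategories: let `T` be a triangulated
category and `A ⊆ T` a full dense triangulated subcategory (every object of `T` is a
direct summand of an object of `A`).  If the induced map `K(A) → K(T)` on Grothendieck
groups is surjective (every class in `K(T)` comes from a combination of objects of `A`),
then `A = T` (every object of `T` lies in `A`). -/
theorem stmt_16 (C : Type*) [Category C] [Limits.HasZeroObject C]
    [HasShift C ℤ] [Preadditive C] [∀ n : ℤ, (shiftFunctor C n).Additive]
    [Pretriangulated C] (S : ObjectProperty C) [S.IsTriangulated] [S.IsClosedUnderIsomorphisms]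
    (hdense : ∀ X : C, ∃ a : C, S a ∧ ∃ (i : X ⟶ a) (p : a ⟶ X), i ≫ p = 𝟙 X)
    (hK : ∀ k : FreeAbelianGroup C ⧸ triangleRelations C,
      ∃ x : FreeAbelianGroup {X : C // S X},
        QuotientAddGroup.mk' (triangleRelations C) (FreeAbelianGroup.map Subtype.val x) = k) :
    ∀ X : C, S X := by
  have hcompl (X : C) : ∃ Y, S (X ⊞ Y) :=
    have ⟨a, ha, i, p, hip⟩ := hdense X
    S.exists_prop_biprod_of_retract ⟨i, p, hip⟩ ha
  let _ : AddCommGroup S.StableClass := ObjectProperty.StableClass.addCommGroup S hcompl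
  exact fun X => S.prop_of_stableClass_mk_eq_zero <|
    eq_zero_of_surjective_grothendieckGroup S hK (ObjectProperty.StableClass.mk S)
      (fun _ hT => ObjectProperty.StableClass.mk_obj₂_eq_add S hcompl hT)
      (fun _ ha => ObjectProperty.StableClass.mk_eq_zero_of_prop S ha) X
end

section
/- Let Σ be a complete simplicial fan in N_ℝ with maximal cones C₁, …, C_v all of dimension n, and let χ = (χ₁,…,χ_v) be a twisted polytope satisfying the ampleness conditions: (i) the convex hull P of {χ₁,…,χ_v} is strictly larger than the convex hull of any proper subset, and (ii) P = {ξ ∈ M_ℝ : ⟨ξ,γ⟩ ≥ ⟨χ_i,γ⟩ for all i and all γ ∈ C_i}. Then the interior P° of P equals the intersection ⋂_{i=1}^v ((C_i)^∨_{χ_i})°, where ((C_i)^∨_{χ_i})° = {x ∈ M_ℝ : ⟨x, γ⟩ > ⟨χ_i, γ⟩ for all nonzero γ ∈ C_i}. -/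
open Matrix

lemma dot_abs_le (n : ℕ) (w γ : Fin n → ℝ) : |w ⬝ᵥ γ| ≤ n * (‖w‖ * ‖γ‖) := by
  calc |w ⬝ᵥ γ| ≤ ∑ k, |w k * γ k| := Finset.abs_sum_le_sum_abs _ _
    _ ≤ ∑ _k : Fin n, ‖w‖ * ‖γ‖ := by
        refine Finset.sum_le_sum fun k _ => ?_
        rw [abs_mul]
        have h1 : |w k| ≤ ‖w‖ := by
          simpa using norm_le_pi_norm w k
        have h2 : |γ k| ≤ ‖γ‖ := by
          simpa using norm_le_pi_norm γ k
        exact mul_le_mul h1 h2 (abs_nonneg _) (norm_nonneg _)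
    _ = n * (‖w‖ * ‖γ‖) := by simp [Finset.sum_const, mul_comm]

lemma dot_continuous (n : ℕ) (x : Fin n → ℝ) : Continuous fun γ : Fin n → ℝ => x ⬝ᵥ γ := by
  unfold dotProduct
  exact continuous_finset_sum _ fun k _ => (continuous_const.mul (continuous_apply k))

lemma dot_self_pos (n : ℕ) {γ : Fin n → ℝ} (h : γ ≠ 0) : 0 < γ ⬝ᵥ γ := by
  have hnn : 0 ≤ γ ⬝ᵥ γ := Finset.sum_nonneg fun k _ => mul_self_nonneg _
  rcases hnn.lt_or_eq with h' | h'
  · exact h'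
  · exfalso; apply h
    funext k
    have := Finset.sum_eq_zero_iff_of_nonneg (fun k _ => mul_self_nonneg (γ k)) |>.mp h'.symm k (Finset.mem_univ k)
    simpa using mul_self_eq_zero.mp this

lemma strict_open (n : ℕ) (Ci : Set (Fin n → ℝ)) (hclosed : IsClosed Ci)
    (hcone : ∀ t : ℝ, 0 ≤ t → ∀ x ∈ Ci, t • x ∈ Ci) (χi : Fin n → ℝ) :
    IsOpen {x : Fin n → ℝ | ∀ γ ∈ Ci, γ ≠ 0 → χi ⬝ᵥ γ < x ⬝ᵥ γ} := by
  rw [Metric.isOpen_iff]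
  intro x hx
  set K : Set (Fin n → ℝ) := Ci ∩ Metric.sphere 0 1 with hK
  by_cases hKne : K.Nonempty
  · -- minimum of x⬝γ - χ⬝γ on K
    have hKc : IsCompact K := (isCompact_sphere (0 : Fin n → ℝ) 1).inter_left hclosed
    have hcont : ContinuousOn (fun γ => x ⬝ᵥ γ - χi ⬝ᵥ γ) K :=
      ((dot_continuous n x).sub (dot_continuous n χi)).continuousOn
    obtain ⟨γ₀, hγ₀K, hmin⟩ := hKc.exists_isMinOn hKne hcont
    set ε := x ⬝ᵥ γ₀ - χi ⬝ᵥ γ₀ with hε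
    have hγ₀ne : γ₀ ≠ 0 := by
      intro h0
      have := hγ₀K.2
      rw [h0] at this
      simp [Metric.mem_sphere] at this
    have hεpos : 0 < ε := sub_pos.mpr (hx γ₀ hγ₀K.1 hγ₀ne)
    -- the key linear bound
    have hbound : ∀ γ ∈ Ci, γ ≠ 0 → χi ⬝ᵥ γ + ε * ‖γ‖ ≤ x ⬝ᵥ γ := by
      intro γ hγ hγ0
      have hng : (0:ℝ) < ‖γ‖ := norm_pos_iff.mpr hγ0
      set u := ‖γ‖⁻¹ • γ with hu
      have huC : u ∈ Ci := hcone _ (by positivity) γ hγ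
      have hun : ‖u‖ = 1 := by
        rw [hu, norm_smul, norm_inv, norm_norm, inv_mul_cancel₀ hng.ne']
      have huK : u ∈ K := ⟨huC, by simpa [Metric.mem_sphere] using hun⟩
      have hle : ε ≤ x ⬝ᵥ u - χi ⬝ᵥ u := hmin huK
      have hdu : ∀ w : Fin n → ℝ, w ⬝ᵥ u = ‖γ‖⁻¹ * (w ⬝ᵥ γ) := by
        intro w
        rw [hu]
        rw [dotProduct_smul]
        simp [smul_eq_mul]
      rw [hdu, hdu] at hle
      have key := mul_le_mul_of_nonneg_left hle hng.le
      have e1 : ‖γ‖ * (‖γ‖⁻¹ * (x ⬝ᵥ γ) - ‖γ‖⁻¹ * (χi ⬝ᵥ γ)) = x ⬝ᵥ γ - χi ⬝ᵥ γ := by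
        field_simp
      rw [e1] at key
      nlinarith
    refine ⟨ε / (n + 1), by positivity, ?_⟩
    intro y hy γ hγ hγ0
    have hng : (0:ℝ) < ‖γ‖ := norm_pos_iff.mpr hγ0
    have hdist : ‖y - x‖ < ε / (n + 1) := by
      rw [Metric.mem_ball, dist_eq_norm] at hy
      exact hy
    have h1 : x ⬝ᵥ γ - y ⬝ᵥ γ ≤ |(x - y) ⬝ᵥ γ| := by
      rw [sub_dotProduct]
      exact le_abs_self _
    have h2 : |(x - y) ⬝ᵥ γ| ≤ n * (‖x - y‖ * ‖γ‖) := dot_abs_le n _ _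
    have h3 : (n : ℝ) * ‖x - y‖ < ε := by
      have hxy : ‖x - y‖ = ‖y - x‖ := norm_sub_rev _ _
      have hn1 : (0:ℝ) < n + 1 := by positivity
      calc (n : ℝ) * ‖x - y‖ ≤ n * (ε / (n + 1)) := by
            apply mul_le_mul_of_nonneg_left _ (Nat.cast_nonneg n)
            rw [hxy]; exact hdist.le
        _ < ε := by
            rw [mul_div_assoc']
            rw [div_lt_iff₀ hn1]
            nlinarith
    have h4 : (n : ℝ) * (‖x - y‖ * ‖γ‖) < ε * ‖γ‖ := by
      rw [← mul_assoc]
      exact mul_lt_mul_of_pos_right h3 hng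
    have h5 := hbound γ hγ hγ0
    linarith [h1.trans (h2.trans h4.le), h1, h2]
  · -- K empty: no nonzero elements of Ci
    refine ⟨1, one_pos, ?_⟩
    intro y _ γ hγ hγ0
    exfalso
    apply hKne
    have hng : (0:ℝ) < ‖γ‖ := norm_pos_iff.mpr hγ0
    refine ⟨‖γ‖⁻¹ • γ, hcone _ (by positivity) γ hγ, ?_⟩
    simp [Metric.mem_sphere, norm_smul, norm_inv, inv_mul_cancel₀ hng.ne']

/-- Let `Σ` be a complete simplicial fan in `N_ℝ ≅ ℝ^n` with maximal cones `C₁,…,C_v`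
all full-dimensional (closed convex cones with nonempty interior covering `ℝ^n`), and let
`χ = (χ₁,…,χ_v)` be a twisted polytope satisfying the ampleness conditions:
(i) the convex hull `P` of `{χ₁,…,χ_v}` is strictly larger than the convex hull of any
proper subset, and (ii) `P = {ξ : ⟨ξ,γ⟩ ≥ ⟨χᵢ,γ⟩ for all i, γ ∈ Cᵢ}`.  Then the interior
`P°` equals `⋂ᵢ ((Cᵢ)^∨_{χᵢ})°`, where
`((Cᵢ)^∨_{χᵢ})° = {x : ⟨x,γ⟩ > ⟨χᵢ,γ⟩ for all nonzero γ ∈ Cᵢ}`. -/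
theorem stmt_19 (n v : ℕ) (C : Fin v → Set (Fin n → ℝ))
    (hconv : ∀ i, Convex ℝ (C i)) (hclosed : ∀ i, IsClosed (C i))
    (hcone : ∀ i, ∀ t : ℝ, 0 ≤ t → ∀ x ∈ C i, t • x ∈ C i)
    (hfulldim : ∀ i, (interior (C i)).Nonempty)
    (hcover : (⋃ i, C i) = Set.univ)
    (χ : Fin v → (Fin n → ℝ))
    (htw : ∀ i j, ∀ γ ∈ C i ∩ C j, χ i ⬝ᵥ γ = χ j ⬝ᵥ γ)
    (hi : ∀ s : Finset (Fin v), s ≠ Finset.univ →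
      convexHull ℝ (χ '' ↑s) ⊂ convexHull ℝ (Set.range χ))
    (hii : convexHull ℝ (Set.range χ) =
      {ξ : Fin n → ℝ | ∀ i, ∀ γ ∈ C i, χ i ⬝ᵥ γ ≤ ξ ⬝ᵥ γ}) :
    interior (convexHull ℝ (Set.range χ)) =
      ⋂ i, {x : Fin n → ℝ | ∀ γ ∈ C i, γ ≠ 0 → χ i ⬝ᵥ γ < x ⬝ᵥ γ} := by
  rw [hii]
  apply subset_antisymm
  · -- interior P ⊆ ⋂ strict
    intro x hx
    rw [mem_interior_iff_mem_nhds, Metric.mem_nhds_iff] at hx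
    obtain ⟨ε, hεpos, hball⟩ := hx
    simp only [Set.mem_iInter, Set.mem_setOf_eq]
    intro i γ hγ hγ0
    have hng : (0:ℝ) < ‖γ‖ := norm_pos_iff.mpr hγ0
    set t := ε / (2 * ‖γ‖) with ht
    have htpos : 0 < t := by positivity
    have hy : x - t • γ ∈ {ξ : Fin n → ℝ | ∀ i, ∀ γ ∈ C i, χ i ⬝ᵥ γ ≤ ξ ⬝ᵥ γ} := by
      apply hball
      rw [Metric.mem_ball, dist_eq_norm]
      have h0 : x - t • γ - x = -(t • γ) := by abel
      rw [h0, norm_neg, norm_smul, Real.norm_eq_abs, abs_of_pos htpos]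
      have he : t * ‖γ‖ = ε / 2 := by
        rw [ht]; field_simp
      rw [he]; linarith
    have hle := hy i γ hγ
    have hcalc : (x - t • γ) ⬝ᵥ γ = x ⬝ᵥ γ - t * (γ ⬝ᵥ γ) := by
      rw [sub_dotProduct, smul_dotProduct]
      simp [smul_eq_mul]
    rw [hcalc] at hle
    have hγγ : 0 < γ ⬝ᵥ γ := dot_self_pos n hγ0
    nlinarith
  · -- ⋂ strict ⊆ interior P
    apply interior_maximal
    · intro x hx
      simp only [Set.mem_iInter, Set.mem_setOf_eq] at hx ⊢
      intro i γ hγ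
      by_cases hγ0 : γ = 0
      · simp [hγ0]
      · exact (hx i γ hγ hγ0).le
    · exact isOpen_iInter_of_finite fun i => strict_open n (C i) (hclosed i) (hcone i) (χ i)
end
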